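/- arXiv:2403.08673 — 6 statements merged into one kernel-verified Lean document; each statement's English description precedes it below -/
import Mathlib

section
/- Let f(x; s) ∈ ℝ^Z be twice continuously differentiable in the parameter vector s ∈ ℝ^p, and define the ball 𝕊 = {s ∈ ℝ^p : ‖s − s(0)‖ ≤ R}. Assume that for every input x, every z ∈ [Z] and every s ∈ 𝕊, the Hessian of f_z(x; ·) at s has spectral norm at most ε and ‖∇_s f_z(x; s)‖₂ ≤ c₀. Then for all inputs x, x̃, all s ∈ 𝕊 and all i, j ∈ [Z], the empirical NTK satisfies |K_ij(x, x̃; s) − K_ij(x, x̃; s(0))| ≤ 2 ε c₀ R. -/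
open scoped RealInnerProductSpace BigOperators

noncomputable section

/-- Lemma: bound on the change in NTK.
If on the ball `𝕊 = {s : ‖s − s₀‖ ≤ R}` every Hessian of `f_z(x;·)` has spectral norm at most
`ε` and every gradient norm is at most `c₀`, then the empirical NTK
`K_ij(x, y; s) = ⟨∇_s f_i(x;s), ∇_s f_j(y;s)⟩` changes by at most `2 ε c₀ R` over `𝕊`. -/
theorem ntk_change_bound
    (D Z p : ℕ)
    (f : Fin Z → EuclideanSpace ℝ (Fin D) → EuclideanSpace ℝ (Fin p) → ℝ)
    (s0 : EuclideanSpace ℝ (Fin p)) (R ε c₀ : ℝ)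
    -- f is twice continuously differentiable in the parameters
    (hf : ∀ z x, ContDiff ℝ 2 (f z x))
    -- Hessian bound on the ball 𝕊
    (hHess : ∀ (x : EuclideanSpace ℝ (Fin D)) (z : Fin Z) (s : EuclideanSpace ℝ (Fin p)),
      ‖s - s0‖ ≤ R → ‖fderiv ℝ (fun s' => gradient (f z x) s') s‖ ≤ ε)
    -- gradient bound on the ball 𝕊
    (hGrad : ∀ (x : EuclideanSpace ℝ (Fin D)) (z : Fin Z) (s : EuclideanSpace ℝ (Fin p)),
      ‖s - s0‖ ≤ R → ‖gradient (f z x) s‖ ≤ c₀)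
    (x y : EuclideanSpace ℝ (Fin D)) (s : EuclideanSpace ℝ (Fin p))
    (hs : ‖s - s0‖ ≤ R) (i j : Fin Z) :
    |⟪gradient (f i x) s, gradient (f j y) s⟫ - ⟪gradient (f i x) s0, gradient (f j y) s0⟫|
      ≤ 2 * ε * c₀ * R := by
  have hR0 : (0:ℝ) ≤ R := le_trans (norm_nonneg _) hs
  have hs0 : ‖s0 - s0‖ ≤ R := by simpa using hR0
  have hc0 : (0:ℝ) ≤ c₀ := le_trans (norm_nonneg _) (hGrad x i s0 hs0)
  have hε0 : (0:ℝ) ≤ ε := le_trans (norm_nonneg _) (hHess x i s0 hs0)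
  -- differentiability of the gradient map
  have hgraddiff : ∀ (z : Fin Z) (x' : EuclideanSpace ℝ (Fin D))
      (t : EuclideanSpace ℝ (Fin p)), DifferentiableAt ℝ (gradient (f z x')) t := by
    intro z x' t
    have h1 : ContDiff ℝ 1 (fderiv ℝ (f z x')) :=
      (hf z x').fderiv_right (by norm_num)
    have h2 : ContDiff ℝ 1 (gradient (f z x')) := by
      have : gradient (f z x') = fun t =>
          (InnerProductSpace.toDual ℝ (EuclideanSpace ℝ (Fin p))).symm
            (fderiv ℝ (f z x') t) := rfl
      rw [this]
      exact (InnerProductSpace.toDual ℝ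
        (EuclideanSpace ℝ (Fin p))).symm.contDiff.comp h1
    exact (h2.differentiable one_ne_zero).differentiableAt
  -- bound on the gradient change
  have key : ∀ (z : Fin Z) (x' : EuclideanSpace ℝ (Fin D)),
      ‖gradient (f z x') s - gradient (f z x') s0‖ ≤ ε * R := by
    intro z x'
    have hconv : Convex ℝ (Metric.closedBall s0 R) := convex_closedBall s0 R
    have hmem : s ∈ Metric.closedBall s0 R := by
      simpa [Metric.mem_closedBall, dist_eq_norm] using hs
    have hmem0 : s0 ∈ Metric.closedBall s0 R := by
      simpa [Metric.mem_closedBall] using hR0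
    have := hconv.norm_image_sub_le_of_norm_fderiv_le
      (f := gradient (f z x')) (C := ε)
      (fun t _ => hgraddiff z x' t)
      (fun t ht => hHess x' z t (by
        simpa [Metric.mem_closedBall, dist_eq_norm] using ht)) hmem0 hmem
    calc ‖gradient (f z x') s - gradient (f z x') s0‖ ≤ ε * ‖s - s0‖ := this
      _ ≤ ε * R := by nlinarith
  -- decompose the difference
  have hdecomp :
      ⟪gradient (f i x) s, gradient (f j y) s⟫ - ⟪gradient (f i x) s0, gradient (f j y) s0⟫
      = ⟪gradient (f i x) s - gradient (f i x) s0, gradient (f j y) s⟫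
        + ⟪gradient (f i x) s0, gradient (f j y) s - gradient (f j y) s0⟫ := by
    simp [inner_sub_left, inner_sub_right]
  rw [hdecomp]
  have h1 : |⟪gradient (f i x) s - gradient (f i x) s0, gradient (f j y) s⟫| ≤ ε * R * c₀ := by
    refine le_trans (abs_real_inner_le_norm _ _) ?_
    exact mul_le_mul (key i x) (hGrad y j s hs) (norm_nonneg _) (by positivity)
  have h2 : |⟪gradient (f i x) s0, gradient (f j y) s - gradient (f j y) s0⟫| ≤ c₀ * (ε * R) := by
    refine le_trans (abs_real_inner_le_norm _ _) ?_
    exact mul_le_mul (hGrad x i s0 hs0) (key j y) (norm_nonneg _) hc0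
  calc |_ + _| ≤ _ := abs_add_le _ _
    _ ≤ ε * R * c₀ + c₀ * (ε * R) := add_le_add h1 h2
    _ = 2 * ε * c₀ * R := by ring
end
end

section
/- Suppose weight sequences V(t) ∈ ℝ^{M×D} and W(t) ∈ ℝ^{M×Z} satisfy, at every step t, |V_ij(t+1) − V_ij(t)| ≤ (β₁/√M) max_{kl}|W_{kl}(t)| and |W_ij(t+1) − W_ij(t)| ≤ (β₂/√M) max_{kl}|V_{kl}(t)|, and at initialization max_{ij}|V_ij(0)| ≤ c(0) and max_{ij}|W_ij(0)| ≤ c(0), where c(0) = c_θ log M. Define β = max{β₁, β₂} and c(t) = c(0)(1 + β/√M)^t. Then for every t ≥ 0, max_{ij}|V_ij(t) − V_ij(0)| ≤ c(t) − c(0) and max_{ij}|W_ij(t) − W_ij(0)| ≤ c(t) − c(0). -/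
/-!
Both weight matrices start inside the max-norm ball of radius `c(0)`. If after `t` steps both
have moved by at most `c(t) - c(0)` entrywise, then both lie in the ball of radius `c(t)`, so the
coupled step bounds move every entry by at most `(β/√M) c(t)` in the next step, and
`c(t) - c(0) + (β/√M) c(t) = c(t+1) - c(0)`. Induction on `t` closes the argument.
-/

noncomputable section

namespace Matrix

variable {m n p : Type*}

def maxNorm (A : Matrix m n ℝ) : ℝ := ⨆ i, ⨆ j, |A i j|

theorem maxNorm_nonneg (A : Matrix m n ℝ) : 0 ≤ A.maxNorm :=
  Real.iSup_nonneg fun _ => Real.iSup_nonneg fun _ => abs_nonneg _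

theorem maxNorm_le {A : Matrix m n ℝ} {a : ℝ} (h : ∀ i j, |A i j| ≤ a) (ha : 0 ≤ a) :
    A.maxNorm ≤ a :=
  Real.iSup_le (fun i => Real.iSup_le (h i) ha) ha

theorem maxNorm_le_of_abs_sub_le {A A₀ : Matrix m n ℝ} {c₀ C : ℝ}
    (h : ∀ i j, |A i j - A₀ i j| ≤ C - c₀) (h₀ : ∀ i j, |A₀ i j| ≤ c₀) (hC : 0 ≤ C) :
    A.maxNorm ≤ C :=
  maxNorm_le (fun i j => by linarith [abs_sub_abs_le_abs_sub (A i j) (A₀ i j), h i j, h₀ i j]) hC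

theorem abs_sub_le_mul_one_add_of_step {A A' A₀ : Matrix m n ℝ} {q s c₀ C : ℝ}
    (hstep : ∀ i j, |A' i j - A i j| ≤ q * s) (hq : 0 ≤ q) (hs : s ≤ C)
    (h : ∀ i j, |A i j - A₀ i j| ≤ C - c₀) (i : m) (j : n) :
    |A' i j - A₀ i j| ≤ C * (1 + q) - c₀ :=
  calc |A' i j - A₀ i j| ≤ |A' i j - A i j| + |A i j - A₀ i j| := abs_sub_le _ _ _
    _ ≤ q * C + (C - c₀) := add_le_add ((hstep i j).trans (by gcongr)) (h i j)
    _ = C * (1 + q) - c₀ := by ring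

theorem abs_sub_init_le_of_coupled_steps (V : ℕ → Matrix m n ℝ) (W : ℕ → Matrix m p ℝ)
    {q c₀ : ℝ} (hq : 0 ≤ q) (hc₀ : 0 ≤ c₀)
    (hV0 : ∀ i j, |V 0 i j| ≤ c₀) (hW0 : ∀ i j, |W 0 i j| ≤ c₀)
    (hVstep : ∀ t i j, |V (t + 1) i j - V t i j| ≤ q * (W t).maxNorm)
    (hWstep : ∀ t i j, |W (t + 1) i j - W t i j| ≤ q * (V t).maxNorm) (t : ℕ) :
    (∀ i j, |V t i j - V 0 i j| ≤ c₀ * (1 + q) ^ t - c₀) ∧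
      ∀ i j, |W t i j - W 0 i j| ≤ c₀ * (1 + q) ^ t - c₀ := by
  induction t with
  | zero => simp
  | succ t ih =>
    obtain ⟨ihV, ihW⟩ := ih
    have hC : 0 ≤ c₀ * (1 + q) ^ t := by positivity
    rw [pow_succ, ← mul_assoc]
    exact ⟨abs_sub_le_mul_one_add_of_step (hVstep t) hq (maxNorm_le_of_abs_sub_le ihW hW0 hC) ihV,
      abs_sub_le_mul_one_add_of_step (hWstep t) hq (maxNorm_le_of_abs_sub_le ihV hV0 hC) ihW⟩

end Matrix

theorem weight_diff_bound_general
    (M D Z : ℕ) (hM : 0 < M) (hD : 0 < D)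
    (β₁ β₂ cθ : ℝ) (hβ₁ : 0 ≤ β₁)
    (V : ℕ → Matrix (Fin M) (Fin D) ℝ) (W : ℕ → Matrix (Fin M) (Fin Z) ℝ)
    (c : ℕ → ℝ)
    (hc : ∀ t, c t = cθ * Real.log M * (1 + max β₁ β₂ / Real.sqrt M) ^ t)
    -- max-norm of the weights at initialization
    (hV0 : ∀ i j, |V 0 i j| ≤ cθ * Real.log M)
    (hW0 : ∀ i j, |W 0 i j| ≤ cθ * Real.log M)
    -- coupled per-step entrywise bounds
    (hVstep : ∀ t (i : Fin M) (j : Fin D),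
      |V (t + 1) i j - V t i j| ≤ β₁ / Real.sqrt M * ⨆ k, ⨆ l, |W t k l|)
    (hWstep : ∀ t (i : Fin M) (j : Fin Z),
      |W (t + 1) i j - W t i j| ≤ β₂ / Real.sqrt M * ⨆ k, ⨆ l, |V t k l|)
    (t : ℕ) :
    (∀ (i : Fin M) (j : Fin D), |V t i j - V 0 i j| ≤ c t - c 0)
    ∧ ∀ (i : Fin M) (j : Fin Z), |W t i j - W 0 i j| ≤ c t - c 0 := by
  have hq : 0 ≤ max β₁ β₂ / Real.sqrt M := div_nonneg (le_max_of_le_left hβ₁) (Real.sqrt_nonneg _)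
  have hc₀ : 0 ≤ cθ * Real.log M := (abs_nonneg _).trans (hV0 ⟨0, hM⟩ ⟨0, hD⟩)
  have hcoeff {β : ℝ} (hβ : β ≤ max β₁ β₂) {s : ℝ} (hs : 0 ≤ s) :
      β / Real.sqrt M * s ≤ max β₁ β₂ / Real.sqrt M * s := by
    gcongr
  have hVstep' t i j := (hVstep t i j).trans (hcoeff (le_max_left _ _) (W t).maxNorm_nonneg)
  have hWstep' t i j := (hWstep t i j).trans (hcoeff (le_max_right _ _) (V t).maxNorm_nonneg)
  simpa [hc] using Matrix.abs_sub_init_le_of_coupled_steps V W hq hc₀ hV0 hW0 hVstep' hWstep' t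

/-- Lemma: bound on the weight difference during training under cosine
similarity. If the per-step entrywise weight changes are coupled through the max-norms with
constants `β₁/√M` and `β₂/√M`, and the initial max-norms are at most `c(0) = c_θ log M`, then
`max_{ij}|V_ij(t) − V_ij(0)| ≤ c(t) − c(0)` and likewise for `W`, where
`c(t) = c(0)(1 + β/√M)^t`, `β = max{β₁, β₂}`. -/
theorem weight_diff_bound
    (M D Z : ℕ) (hM : 0 < M) (hD : 0 < D) (hZ : 0 < Z)
    (β₁ β₂ cθ : ℝ) (hβ₁ : 0 ≤ β₁) (hβ₂ : 0 ≤ β₂)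
    (V : ℕ → Matrix (Fin M) (Fin D) ℝ) (W : ℕ → Matrix (Fin M) (Fin Z) ℝ)
    (c : ℕ → ℝ)
    (hc : ∀ t, c t = cθ * Real.log M * (1 + max β₁ β₂ / Real.sqrt M) ^ t)
    -- max-norm of the weights at initialization
    (hV0 : ∀ i j, |V 0 i j| ≤ cθ * Real.log M)
    (hW0 : ∀ i j, |W 0 i j| ≤ cθ * Real.log M)
    -- coupled per-step entrywise bounds
    (hVstep : ∀ t (i : Fin M) (j : Fin D),
      |V (t + 1) i j - V t i j| ≤ β₁ / Real.sqrt M * ⨆ k, ⨆ l, |W t k l|)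
    (hWstep : ∀ t (i : Fin M) (j : Fin Z),
      |W (t + 1) i j - W t i j| ≤ β₂ / Real.sqrt M * ⨆ k, ⨆ l, |V t k l|)
    (t : ℕ) :
    (∀ (i : Fin M) (j : Fin D), |V t i j - V 0 i j| ≤ c t - c 0)
    ∧ ∀ (i : Fin M) (j : Fin Z), |W t i j - W 0 i j| ≤ c t - c 0 :=
  weight_diff_bound_general M D Z hM hD β₁ β₂ cθ hβ₁ V W c hc hV0 hW0 hVstep hWstep t
end
end

section
/- Consider the two-layer network f(x;θ) = (1/√M) Wᵀ φ(V x) trained by gradient descent on a contrastive loss L = (1/N) Σ_n l({s(x_n, x_{n,q})}_q) where s is either the dot-product similarity or the cosine similarity with offset δ > 0. If two columns of the output-layer matrix are equal at initialization, W_{·i}(0) = W_{·j}(0), then for all t ≥ 0 the columns remain equal, W_{·i}(t) = W_{·j}(t), and consequently f_i(x; θ(t)) = f_j(x; θ(t)) for every input x. -/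
open scoped RealInnerProductSpace BigOperators
open Matrix

noncomputable section

abbrev Params (M D Z : ℕ) := EuclideanSpace ℝ ((Fin M × Fin D) ⊕ (Fin M × Fin Z))

def Vmat {M D Z : ℕ} (θ : Params M D Z) : Matrix (Fin M) (Fin D) ℝ :=
  fun i j => θ (Sum.inl (i, j))

def Wmat {M D Z : ℕ} (θ : Params M D Z) : Matrix (Fin M) (Fin Z) ℝ :=
  fun i j => θ (Sum.inr (i, j))

/-- The two-layer network `f(x;θ) = (1/√M) Wᵀ φ(Vx)`. -/
def netOut {M D Z : ℕ} (φ : ℝ → ℝ) (θ : Params M D Z) (x : EuclideanSpace ℝ (Fin D)) :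
    EuclideanSpace ℝ (Fin Z) :=
  WithLp.toLp 2 (fun z => (Real.sqrt M)⁻¹ * ∑ m, Wmat θ m z * φ (∑ d, Vmat θ m d * x d))

/-- Cosine similarity with offset `δ`. -/
def cosSim {M D Z : ℕ} (φ : ℝ → ℝ) (δ : ℝ) (θ : Params M D Z)
    (x y : EuclideanSpace ℝ (Fin D)) : ℝ :=
  ⟪netOut φ θ x, netOut φ θ y⟫ / ((‖netOut φ θ x‖ + δ) * (‖netOut φ θ y‖ + δ))

lemma gradient_comp_isometry {E : Type*} [NormedAddCommGroup E] [InnerProductSpace ℝ E]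
    [CompleteSpace E]
    (L : E → ℝ) (σ : E ≃ₗᵢ[ℝ] E) (hL : ∀ x, L (σ x) = L x) (x : E) :
    gradient L (σ x) = σ (gradient L x) := by
  have hcomp : L ∘ σ = L := funext hL
  have hfd : fderiv ℝ L x =
      (fderiv ℝ L (σ.toContinuousLinearEquiv x)).comp
        (σ.toContinuousLinearEquiv : E →L[ℝ] E) := by
    conv_lhs => rw [← hcomp]
    exact σ.toContinuousLinearEquiv.comp_right_fderiv
  apply ext_inner_right ℝ
  intro v
  obtain ⟨w, rfl⟩ := σ.surjective v
  show ⟪(InnerProductSpace.toDual ℝ E).symm (fderiv ℝ L (σ x)), σ w⟫ = _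
  rw [InnerProductSpace.toDual_symm_apply, σ.inner_map_map]
  show _ = ⟪(InnerProductSpace.toDual ℝ E).symm (fderiv ℝ L x), w⟫
  rw [InnerProductSpace.toDual_symm_apply, hfd]
  rfl

/-- Proposition: dimension collapse from equal columns at initialization.
Under gradient descent on a contrastive loss built from dot-product or cosine similarity,
equal output-layer columns at initialization remain equal forever, and the corresponding output
coordinates coincide for every input. -/
theorem column_collapse
    (M D Z N Q : ℕ) (hN : 0 < N)
    (φ : ℝ → ℝ) (δ η : ℝ) (hδ : 0 < δ)
    (hφd : Differentiable ℝ φ)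
    (l : EuclideanSpace ℝ (Fin Q) → ℝ) (hl : Differentiable ℝ l)
    (X : Fin N → EuclideanSpace ℝ (Fin D)) (Xq : Fin N → Fin Q → EuclideanSpace ℝ (Fin D))
    (sim : Params M D Z → EuclideanSpace ℝ (Fin D) → EuclideanSpace ℝ (Fin D) → ℝ)
    -- the similarity is either the dot product or the cosine similarity
    (hsim : (∀ θ x y, sim θ x y = ⟪netOut φ θ x, netOut φ θ y⟫) ∨
            (∀ θ x y, sim θ x y = cosSim φ δ θ x y))
    (L : Params M D Z → ℝ)
    (hL : L = fun θ => (N : ℝ)⁻¹ * ∑ n, l (WithLp.toLp 2 (fun q => sim θ (X n) (Xq n q))))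
    (θ : ℕ → Params M D Z)
    (hGD : ∀ t, θ (t + 1) = θ t - η • gradient L (θ t))
    (i j : Fin Z)
    -- W_{·i}(0) = W_{·j}(0)
    (h0 : ∀ m, Wmat (θ 0) m i = Wmat (θ 0) m j)
    (t : ℕ) :
    (∀ m, Wmat (θ t) m i = Wmat (θ t) m j) ∧
      ∀ x : EuclideanSpace ℝ (Fin D), netOut φ (θ t) x i = netOut φ (θ t) x j := by
  -- index permutation swapping the (·, i) and (·, j) entries of W
  set e : ((Fin M × Fin D) ⊕ (Fin M × Fin Z)) ≃ ((Fin M × Fin D) ⊕ (Fin M × Fin Z)) :=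
    Equiv.sumCongr (Equiv.refl _) ((Equiv.refl (Fin M)).prodCongr (Equiv.swap i j)) with he
  set σ : Params M D Z ≃ₗᵢ[ℝ] Params M D Z :=
    LinearIsometryEquiv.piLpCongrLeft 2 ℝ ℝ e with hσ
  set τ : EuclideanSpace ℝ (Fin Z) ≃ₗᵢ[ℝ] EuclideanSpace ℝ (Fin Z) :=
    LinearIsometryEquiv.piLpCongrLeft 2 ℝ ℝ (Equiv.swap i j) with hτ
  have hσl : ∀ (ϑ : Params M D Z) (p : Fin M × Fin D), σ ϑ (Sum.inl p) = ϑ (Sum.inl p) := by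
    intro ϑ p
    simp [hσ, he, LinearIsometryEquiv.piLpCongrLeft_apply, Equiv.piCongrLeft'_apply]
  have hσr : ∀ (ϑ : Params M D Z) (m : Fin M) (z : Fin Z),
      σ ϑ (Sum.inr (m, z)) = ϑ (Sum.inr (m, Equiv.swap i j z)) := by
    intro ϑ m z
    simp [hσ, he, LinearIsometryEquiv.piLpCongrLeft_apply, Equiv.piCongrLeft'_apply]
  -- netOut of σ ϑ is τ of netOut of ϑ
  have hnet : ∀ (ϑ : Params M D Z) (x : EuclideanSpace ℝ (Fin D)),
      netOut φ (σ ϑ) x = τ (netOut φ ϑ x) := by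
    intro ϑ x
    ext z
    have : τ (netOut φ ϑ x) z = netOut φ ϑ x (Equiv.swap i j z) := by
      simp [hτ, LinearIsometryEquiv.piLpCongrLeft_apply, Equiv.piCongrLeft'_apply]
    rw [this]
    simp only [netOut, PiLp.toLp_apply, Wmat, Vmat, hσl, hσr]
  -- sim is invariant under σ
  have hsiminv : ∀ (ϑ : Params M D Z) x y, sim (σ ϑ) x y = sim ϑ x y := by
    intro ϑ x y
    rcases hsim with h | h
    · rw [h, h, hnet, hnet, τ.inner_map_map]
    · rw [h, h]
      unfold cosSim
      rw [hnet, hnet, τ.inner_map_map, τ.norm_map, τ.norm_map]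
  have hLinv : ∀ ϑ, L (σ ϑ) = L ϑ := by
    intro ϑ
    subst hL
    simp only [hsiminv]
  -- fixed points of σ propagate along gradient descent
  have hfix : ∀ s, σ (θ s) = θ s := by
    intro s
    induction s with
    | zero =>
      ext k
      rcases k with p | ⟨m, z⟩
      · exact hσl _ p
      · rw [hσr]
        by_cases hzi : z = i
        · subst hzi; rw [Equiv.swap_apply_left]; exact (h0 m).symm
        by_cases hzj : z = j
        · subst hzj; rw [Equiv.swap_apply_right]; exact h0 m
        · rw [Equiv.swap_apply_of_ne_of_ne hzi hzj]
    | succ s ih =>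
      rw [hGD s, map_sub, σ.map_smul, ih, ← gradient_comp_isometry L σ hLinv, ih]
  -- extract the conclusions
  have hW : ∀ m, Wmat (θ t) m i = Wmat (θ t) m j := by
    intro m
    have := congrFun (congrArg WithLp.ofLp (hfix t)) (Sum.inr (m, i))
    rw [hσr, Equiv.swap_apply_left] at this
    exact this.symm
  refine ⟨hW, fun x => ?_⟩
  simp only [netOut, PiLp.toLp_apply]
  congr 1
  exact Finset.sum_congr rfl fun m _ => by rw [hW m]
end
end

section
/- Let w₁, …, w_M, v₁, …, v_M be independent standard normal random variables. Then the probability that (Σ_{m=1}^M w_m v_m)² ≤ 1 is strictly less than 5/√M. -/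
open scoped BigOperators
open MeasureTheory ProbabilityTheory

noncomputable section

open Real
open scoped NNReal ENNReal

lemma integral_gaussianReal_smul {E : Type*} [NormedAddCommGroup E] [NormedSpace ℝ E]
    (g : ℝ → E) :
    ∫ x, g x ∂(gaussianReal 0 1) = ∫ x, gaussianPDFReal 0 1 x • g x := by
  rw [gaussianReal_of_var_ne_zero 0 one_ne_zero, gaussianPDF_def]
  have h : (fun x => ENNReal.ofReal (gaussianPDFReal 0 1 x))
      = fun x => ((Real.toNNReal (gaussianPDFReal 0 1 x) : ℝ≥0) : ℝ≥0∞) := rfl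
  rw [h, integral_withDensity_eq_integral_smul
    ((measurable_gaussianPDFReal 0 1).real_toNNReal)]
  congr 1
  ext x
  rw [NNReal.smul_def, Real.coe_toNNReal _ (gaussianPDFReal_nonneg 0 1 x)]

lemma gaussianPDFReal_zero_one (x : ℝ) :
    gaussianPDFReal 0 1 x = (Real.sqrt (2 * π))⁻¹ * Real.exp (-x ^ 2 / 2) := by
  simp [gaussianPDFReal]


abbrev γ : Measure ℝ := gaussianReal 0 1

-- G1: characteristic function of standard gaussian
lemma charfn_gaussian (a : ℝ) :
    ∫ x, Complex.exp (a * x * Complex.I) ∂(gaussianReal 0 1)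
      = (Real.exp (-a ^ 2 / 2) : ℝ) := by
  rw [integral_gaussianReal_smul]
  have h : ∀ x : ℝ, gaussianPDFReal 0 1 x • Complex.exp (a * x * Complex.I)
      = ((Real.sqrt (2 * π))⁻¹ : ℂ) *
        Complex.exp ((-(1/2) : ℂ) * x ^ 2 + (a * Complex.I) * x + 0) := by
    intro x
    rw [gaussianPDFReal_zero_one]
    push_cast
    rw [Complex.real_smul]
    push_cast
    rw [mul_assoc, ← Complex.exp_add]
    congr 2
    ring
  simp_rw [h]
  rw [integral_const_mul, integral_cexp_quadratic (by norm_num) _ _]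
  have h2 : ((π : ℂ) / -(-(1/2))) ^ (1 / 2 : ℂ) = (Real.sqrt (2 * π) : ℂ) := by
    rw [show ((π : ℂ) / -(-(1/2 : ℂ))) = ((2 * π : ℝ) : ℂ) by push_cast; ring,
      show (1/2 : ℂ) = ((1/2 : ℝ) : ℂ) by norm_num,
      ← Complex.ofReal_cpow (by positivity), Real.sqrt_eq_rpow]
  rw [h2]
  rw [show (0 - (a * Complex.I) ^ 2 / (4 * -(1/2)) : ℂ) = ((-a ^ 2 / 2 : ℝ) : ℂ) by
    push_cast; rw [mul_pow, Complex.I_sq]; ring]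
  rw [← Complex.ofReal_exp]
  rw [← mul_assoc, ← Complex.ofReal_inv, ← Complex.ofReal_mul]
  rw [inv_mul_cancel₀ (by positivity), Complex.ofReal_one, one_mul]

-- G2
lemma integral_exp_neg_mul_sq_gaussianReal {c : ℝ} (hc : 0 ≤ c) :
    ∫ x, Real.exp (-c * x ^ 2) ∂(gaussianReal 0 1) = (Real.sqrt (1 + 2 * c))⁻¹ := by
  rw [integral_gaussianReal_smul]
  have h : ∀ x : ℝ, gaussianPDFReal 0 1 x • Real.exp (-c * x ^ 2)
      = (Real.sqrt (2 * π))⁻¹ * Real.exp (-(c + 1/2) * x ^ 2) := by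
    intro x
    rw [gaussianPDFReal_zero_one, smul_eq_mul, mul_assoc, ← Real.exp_add]
    ring_nf
  simp_rw [h]
  rw [integral_const_mul, integral_gaussian]
  have hpos : (0:ℝ) < 1 + 2 * c := by linarith
  rw [show π / (c + 1/2) = (2 * π) * (1 + 2 * c)⁻¹ by field_simp; ring]
  rw [show (2 * π * (1 + 2*c)⁻¹ : ℝ) = (√2 * √π * (√(1 + 2*c))⁻¹)^2 by
      rw [mul_pow, mul_pow, inv_pow, Real.sq_sqrt two_pos.le, Real.sq_sqrt Real.pi_pos.le,
        Real.sq_sqrt hpos.le],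
    Real.sqrt_sq (by positivity), ← mul_assoc, Real.sqrt_mul two_pos.le π,
    inv_mul_cancel₀ (by positivity), one_mul]

-- general-measure version of integral_fin_nat_prod_eq_prod
theorem my_integral_pi_prod {𝕜 : Type*} [RCLike 𝕜] {n : ℕ} (μ : Measure ℝ)
    [IsProbabilityMeasure μ] (f : Fin n → ℝ → 𝕜) :
    ∫ x : Fin n → ℝ, ∏ i, f i (x i) ∂(Measure.pi fun _ => μ)
      = ∏ i, ∫ x, f i x ∂μ := by
  induction n with
  | zero =>
      simp only [Finset.univ_eq_empty, Finset.prod_empty, integral_const]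
      simp
  | succ n ih =>
      calc
        _ = ∫ x : ℝ × (Fin n → ℝ), f 0 x.1 * ∏ i : Fin n, f (Fin.succ i) (x.2 i)
            ∂(μ.prod (Measure.pi fun _ => μ)) := by
          rw [← ((measurePreserving_piFinSuccAbove (fun _ : Fin (n+1) => μ) 0).symm).integral_comp']
          congr 1
          ext x
          simp_rw [MeasurableEquiv.piFinSuccAbove_symm_apply, Fin.insertNthEquiv,
            Fin.prod_univ_succ, Fin.insertNth_zero, Equiv.coe_fn_mk]
          simp [Fin.zero_succAbove]
        _ = (∫ x, f 0 x ∂μ) * ∏ i : Fin n, ∫ x, f (Fin.succ i) x ∂μ := by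
          rw [← ih (fun i => f (Fin.succ i)), ← integral_prod_mul]
        _ = ∏ i, ∫ x, f i x ∂μ := by rw [Fin.prod_univ_succ]



lemma measurable_S (M : ℕ) :
    Measurable (fun ω : (Fin M ⊕ Fin M) → ℝ =>
      ∑ m : Fin M, ω (Sum.inl m) * ω (Sum.inr m)) := by
  exact Finset.measurable_sum _ fun m _ =>
    ((measurable_pi_apply _).mul (measurable_pi_apply _))

lemma integral_cexp_S (M : ℕ) (t : ℝ) :
    ∫ ω : (Fin M ⊕ Fin M) → ℝ,
        Complex.exp (t * (∑ m : Fin M, ω (Sum.inl m) * ω (Sum.inr m)) * Complex.I)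
        ∂(Measure.pi fun _ => γ)
      = (((∫ x, rexp (-(t^2/2) * x^2) ∂γ) ^ M : ℝ) : ℂ) := by
  have mp := measurePreserving_sumPiEquivProdPi_symm (fun _ : Fin M ⊕ Fin M => γ)
  rw [← mp.integral_comp']
  have key : ∀ p : (Fin M → ℝ) × (Fin M → ℝ),
      Complex.exp (t * (∑ m : Fin M,
          ((MeasurableEquiv.sumPiEquivProdPi (fun _ : Fin M ⊕ Fin M => ℝ)).symm p) (Sum.inl m) *
          ((MeasurableEquiv.sumPiEquivProdPi (fun _ : Fin M ⊕ Fin M => ℝ)).symm p) (Sum.inr m)) *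
          Complex.I)
        = ∏ m : Fin M, Complex.exp ((t * (p.1 m * p.2 m) : ℝ) * Complex.I) := by
    intro p
    have h1 : ∀ i : Fin M,
        ((MeasurableEquiv.sumPiEquivProdPi (fun _ : Fin M ⊕ Fin M => ℝ)).symm p) (Sum.inl i)
          = p.1 i := fun _ => rfl
    have h2 : ∀ i : Fin M,
        ((MeasurableEquiv.sumPiEquivProdPi (fun _ : Fin M ⊕ Fin M => ℝ)).symm p) (Sum.inr i)
          = p.2 i := fun _ => rfl
    rw [← Complex.exp_sum]
    congr 1
    simp_rw [h1, h2]
    push_cast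
    rw [Finset.mul_sum, Finset.sum_mul]
  simp_rw [key]
  -- Fubini on the product
  rw [MeasureTheory.integral_prod]
  · -- inner integral over v
    have inner : ∀ w : Fin M → ℝ,
        (∫ v : Fin M → ℝ, ∏ m : Fin M, Complex.exp ((t * (w m * v m) : ℝ) * Complex.I)
          ∂(Measure.pi fun _ => γ))
        = ∏ m : Fin M, ((rexp (-(t^2/2) * (w m)^2) : ℝ) : ℂ) := by
      intro w
      rw [my_integral_pi_prod γ (fun m y => Complex.exp ((t * (w m * y) : ℝ) * Complex.I))]
      congr 1
      ext m
      have := charfn_gaussian (t * w m)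
      rw [show (fun y : ℝ => Complex.exp ((t * (w m * y) : ℝ) * Complex.I))
          = fun y : ℝ => Complex.exp ((t * w m : ℝ) * y * Complex.I) by
        ext y; push_cast; ring_nf]
      rw [this]
      congr 1
      ring
    simp_rw [inner]
    rw [my_integral_pi_prod γ (fun m x => ((rexp (-(t^2/2) * x^2) : ℝ) : ℂ))]
    rw [Finset.prod_const, Finset.card_univ, Fintype.card_fin]
    rw [Complex.ofReal_pow]
    congr 1
    exact integral_ofReal
  · -- integrability
    apply Integrable.mono' (integrable_const 1)
    · apply Measurable.aestronglyMeasurable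
      refine Finset.measurable_prod _ fun m _ => Measurable.cexp ?_
      exact (Complex.measurable_ofReal.comp
        ((measurable_const.mul ((measurable_fst.eval).mul (measurable_snd.eval))))).mul
        measurable_const
    · refine ae_of_all _ fun p => ?_
      simp [map_prod, Complex.norm_exp]

-- L3
lemma integral_cos_gaussian (s : ℝ) :
    ∫ t, Real.cos (t * s) ∂γ = rexp (-s ^ 2 / 2) := by
  have hint : Integrable (fun t : ℝ => Complex.exp (s * t * Complex.I)) γ := by
    apply Integrable.mono' (integrable_const 1)
    · exact (((Complex.measurable_ofReal.comp measurable_id).const_mul _).mul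
        measurable_const).cexp.aestronglyMeasurable
    · refine ae_of_all _ fun t => ?_
      rw [show ((s : ℂ) * t * Complex.I) = ((s * t : ℝ) : ℂ) * Complex.I by push_cast; ring]
      rw [Complex.norm_exp_ofReal_mul_I]
  have h := Complex.reCLM.integral_comp_comm hint
  simp only [charfn_gaussian s] at h
  have h2 : ∀ t : ℝ, Complex.reCLM (Complex.exp (s * t * Complex.I)) = Real.cos (t * s) := by
    intro t
    rw [show ((s : ℂ) * t * Complex.I) = ((t * s : ℝ) : ℂ) * Complex.I by push_cast; ring]
    exact Complex.exp_ofReal_mul_I_re _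
  simp only [h2] at h
  rw [h]
  exact Complex.ofReal_re _

-- Step E
lemma integral_cos_S (M : ℕ) (t : ℝ) :
    ∫ ω : (Fin M ⊕ Fin M) → ℝ,
        Real.cos (t * (∑ m : Fin M, ω (Sum.inl m) * ω (Sum.inr m)))
        ∂(Measure.pi fun _ => γ)
      = (∫ x, rexp (-(t^2/2) * x^2) ∂γ) ^ M := by
  have hS : Measurable (fun ω : (Fin M ⊕ Fin M) → ℝ =>
      ∑ m : Fin M, ω (Sum.inl m) * ω (Sum.inr m)) :=
    Finset.measurable_sum _ fun m _ => ((measurable_pi_apply _).mul (measurable_pi_apply _))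
  have hint : Integrable (fun ω : (Fin M ⊕ Fin M) → ℝ =>
      Complex.exp (t * (∑ m : Fin M, ω (Sum.inl m) * ω (Sum.inr m)) * Complex.I))
      (Measure.pi fun _ => γ) := by
    apply Integrable.mono' (integrable_const 1)
    · exact (((Complex.measurable_ofReal.comp hS).const_mul _).mul
        measurable_const).cexp.aestronglyMeasurable
    · refine ae_of_all _ fun ω => ?_
      rw [show ((t : ℂ) * (∑ m : Fin M, ω (Sum.inl m) * ω (Sum.inr m)) * Complex.I)
          = ((t * (∑ m : Fin M, ω (Sum.inl m) * ω (Sum.inr m)) : ℝ) : ℂ) * Complex.I by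
        push_cast; ring]
      rw [Complex.norm_exp_ofReal_mul_I]
  have h := Complex.reCLM.integral_comp_comm hint
  rw [integral_cexp_S M t] at h
  have h2 : ∀ ω : (Fin M ⊕ Fin M) → ℝ,
      Complex.reCLM (Complex.exp (t * (∑ m : Fin M, ω (Sum.inl m) * ω (Sum.inr m)) * Complex.I))
        = Real.cos (t * (∑ m : Fin M, ω (Sum.inl m) * ω (Sum.inr m))) := by
    intro ω
    rw [show ((t : ℂ) * (∑ m : Fin M, ω (Sum.inl m) * ω (Sum.inr m)) * Complex.I)
        = ((t * (∑ m : Fin M, ω (Sum.inl m) * ω (Sum.inr m)) : ℝ) : ℂ) * Complex.I by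
      push_cast; ring]
    exact Complex.exp_ofReal_mul_I_re _
  simp only [h2] at h
  rw [h]
  exact Complex.ofReal_re _

-- pointwise bound on ((√(1+t²))⁻¹)^M
lemma pow_bound (M : ℕ) (t : ℝ) :
    ((Real.sqrt (1 + t ^ 2))⁻¹) ^ M
      ≤ rexp (-((M : ℝ) / 4) * t ^ 2) + ((Real.sqrt 2)⁻¹) ^ M := by
  set u := t ^ 2 with hu
  have hu0 : 0 ≤ u := sq_nonneg t
  rcases le_or_gt u 1 with h1 | h1
  · -- u ≤ 1 : first term dominates
    have hexp : rexp (u / 2) ≤ 1 + u := by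
      have e1 : 1 - u / 2 ≤ rexp (-(u / 2)) := by
        have := Real.add_one_le_exp (-(u / 2)); linarith
      have e2 : (1 - u / 2) * rexp (u / 2) ≤ 1 := by
        have := mul_le_mul_of_nonneg_right e1 (Real.exp_pos (u / 2)).le
        rwa [← Real.exp_add, neg_add_cancel, Real.exp_zero] at this
      nlinarith [Real.exp_pos (u / 2), e2]
    have hsq : rexp (u / 4) ≤ Real.sqrt (1 + u) := by
      have h' := Real.sqrt_le_sqrt hexp
      rw [← Real.exp_half] at h'
      rwa [show u / 2 / 2 = u / 4 by ring] at h'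
    have hinv : (Real.sqrt (1 + u))⁻¹ ≤ rexp (-(u / 4)) := by
      rw [Real.exp_neg]
      exact inv_anti₀ (Real.exp_pos _) hsq
    calc ((Real.sqrt (1 + u))⁻¹) ^ M ≤ (rexp (-(u / 4))) ^ M :=
          pow_le_pow_left₀ (by positivity) hinv M
      _ = rexp (-((M : ℝ) / 4) * u) := by
          rw [← Real.exp_nat_mul]; ring_nf
      _ ≤ _ := le_add_of_nonneg_right (by positivity)
  · -- u > 1 : second term dominates
    have hsq : Real.sqrt 2 ≤ Real.sqrt (1 + u) := Real.sqrt_le_sqrt (by linarith)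
    have hinv : (Real.sqrt (1 + u))⁻¹ ≤ (Real.sqrt 2)⁻¹ :=
      inv_anti₀ (by positivity) hsq
    calc ((Real.sqrt (1 + u))⁻¹) ^ M ≤ ((Real.sqrt 2)⁻¹) ^ M :=
          pow_le_pow_left₀ (by positivity) hinv M
      _ ≤ _ := le_add_of_nonneg_left (by positivity)

-- numeric: rexp 2⁻¹ * (√2 + 1) < 5
lemma numeric_bound : rexp 2⁻¹ * (Real.sqrt 2 + 1) < 5 := by
  have h1 : rexp 2⁻¹ * rexp 2⁻¹ = rexp 1 := by
    rw [← Real.exp_add]; norm_num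
  have h2 : rexp 1 < 2.7182818286 := Real.exp_one_lt_d9
  have h3 : rexp 2⁻¹ < 1.6488 := by nlinarith [Real.exp_pos 2⁻¹]
  have h4 : Real.sqrt 2 < 1.41422 := by
    nlinarith [Real.sq_sqrt (by norm_num : (0:ℝ) ≤ 2), Real.sqrt_nonneg 2]
  nlinarith [Real.exp_pos 2⁻¹, Real.sqrt_nonneg 2]

-- sqrt comparisons
lemma sqrt_term1 (M : ℕ) (hM : 0 < M) :
    (Real.sqrt (1 + 2 * ((M : ℝ) / 4)))⁻¹ ≤ Real.sqrt 2 / Real.sqrt M := by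
  have hM1 : (1:ℝ) ≤ M := by exact_mod_cast hM
  have a1 : (Real.sqrt (1 + 2 * ((M : ℝ) / 4)))⁻¹ ≤ (Real.sqrt ((M : ℝ) / 2))⁻¹ := by
    apply inv_anti₀ (Real.sqrt_pos.2 (by linarith)) (Real.sqrt_le_sqrt (by linarith))
  have a2 : (Real.sqrt ((M : ℝ) / 2))⁻¹ = Real.sqrt 2 / Real.sqrt M := by
    rw [← Real.sqrt_inv, show ((M : ℝ) / 2)⁻¹ = 2 / (M : ℝ) by
        field_simp,
      Real.sqrt_div (by norm_num : (0:ℝ) ≤ 2)]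
  rw [← a2]; exact a1

lemma sqrt_term2 (M : ℕ) (hM : 0 < M) :
    ((Real.sqrt 2)⁻¹) ^ M ≤ (Real.sqrt M)⁻¹ := by
  have hp : ((Real.sqrt 2) ^ M) ^ 2 = 2 ^ M := by
    rw [← pow_mul, mul_comm, pow_mul, Real.sq_sqrt (by norm_num : (0:ℝ) ≤ 2)]
  have h1 : Real.sqrt M ≤ (Real.sqrt 2) ^ M := by
    rw [show ((Real.sqrt 2) ^ M) = Real.sqrt (((Real.sqrt 2) ^ M) ^ 2) by
      rw [Real.sqrt_sq (by positivity)]]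
    apply Real.sqrt_le_sqrt
    rw [hp]
    exact_mod_cast (Nat.lt_two_pow_self (n := M)).le
  rw [inv_pow]
  exact inv_anti₀ (Real.sqrt_pos.2 (by exact_mod_cast hM)) h1

/-- small-ball estimate via Berry–Esseen. For `w_1,…,w_M,v_1,…,v_M`
independent standard normals, `P((Σ_m w_m v_m)² ≤ 1) < 5/√M`. -/
theorem small_ball_product_gaussians (M : ℕ) (hM : 0 < M) :
    ((Measure.pi fun _ : Fin M ⊕ Fin M => gaussianReal 0 1)
      {ω | (∑ m : Fin M, ω (Sum.inl m) * ω (Sum.inr m)) ^ 2 ≤ 1}).toReal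
      < 5 / Real.sqrt M := by
  set μ : Measure ((Fin M ⊕ Fin M) → ℝ) := Measure.pi fun _ => gaussianReal 0 1 with hμ
  set S : ((Fin M ⊕ Fin M) → ℝ) → ℝ :=
    fun ω => ∑ m : Fin M, ω (Sum.inl m) * ω (Sum.inr m) with hSdef
  have hS : Measurable S :=
    Finset.measurable_sum _ fun m _ => ((measurable_pi_apply _).mul (measurable_pi_apply _))
  have hA : MeasurableSet {ω : (Fin M ⊕ Fin M) → ℝ | S ω ^ 2 ≤ 1} :=
    measurableSet_le (hS.pow_const 2) measurable_const
  have hint_exp : Integrable (fun ω => rexp (-S ω ^ 2 / 2)) μ := by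
    apply Integrable.mono' (integrable_const 1)
    · exact (Real.measurable_exp.comp ((hS.pow_const 2).neg.div_const 2)).aestronglyMeasurable
    · refine ae_of_all _ fun ω => ?_
      rw [Real.norm_eq_abs, abs_of_nonneg (Real.exp_pos _).le]
      exact Real.exp_le_one_iff.2 (by nlinarith [sq_nonneg (S ω)])
  -- Step 1 : indicator bound
  have step1 : ((μ {ω | S ω ^ 2 ≤ 1}).toReal)
      ≤ rexp 2⁻¹ * ∫ ω, rexp (-S ω ^ 2 / 2) ∂μ := by
    change μ.real {ω | S ω ^ 2 ≤ 1} ≤ _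
    rw [← integral_indicator_one hA, ← integral_const_mul]
    apply integral_mono ((integrable_const (1:ℝ)).indicator hA) (hint_exp.const_mul _)
    intro ω
    simp only [Set.indicator_apply, Set.mem_setOf_eq, Pi.one_apply]
    split_ifs with h
    · rw [show (1:ℝ) = rexp 0 by simp, ← Real.exp_add]
      exact Real.exp_le_exp.2 (by nlinarith)
    · positivity
  -- Step 2 : Fourier + Fubini
  have step2 : ∫ ω, rexp (-S ω ^ 2 / 2) ∂μ
      = ∫ t, ((∫ x, rexp (-(t^2/2) * x^2) ∂γ) ^ M) ∂γ := by
    have e1 : ∀ ω, rexp (-S ω ^ 2 / 2) = ∫ t, Real.cos (t * S ω) ∂γ :=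
      fun ω => (integral_cos_gaussian (S ω)).symm
    simp_rw [e1]
    rw [integral_integral_swap]
    · exact integral_congr_ae (ae_of_all _ fun t => integral_cos_S M t)
    · apply Integrable.mono' (integrable_const 1)
      · exact (Real.measurable_cos.comp
          (measurable_snd.mul (hS.comp measurable_fst))).aestronglyMeasurable
      · refine ae_of_all _ fun p => ?_
        rw [Real.norm_eq_abs]
        exact Real.abs_cos_le_one _
  -- rewrite the inner gaussian integral
  have e2 : ∀ t : ℝ, (∫ x, rexp (-(t^2/2) * x^2) ∂γ) = (Real.sqrt (1 + t ^ 2))⁻¹ := by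
    intro t
    rw [integral_exp_neg_mul_sq_gaussianReal (by positivity)]
    congr 2
    ring
  -- Step 3 : bound the t-integral
  have step3 : ∫ t, ((Real.sqrt (1 + t ^ 2))⁻¹) ^ M ∂γ
      ≤ (Real.sqrt (1 + 2 * ((M : ℝ) / 4)))⁻¹ + ((Real.sqrt 2)⁻¹) ^ M := by
    have int1 : Integrable (fun t : ℝ => ((Real.sqrt (1 + t ^ 2))⁻¹) ^ M) γ := by
      apply Integrable.mono' (integrable_const 1)
      · exact (((measurable_const.add (measurable_id.pow_const 2)).sqrt.inv.pow_const
          M)).aestronglyMeasurable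
      · refine ae_of_all _ fun t => ?_
        rw [Real.norm_eq_abs, abs_of_nonneg (by positivity)]
        apply pow_le_one₀ (by positivity)
        rw [inv_le_one_iff₀]
        right
        exact Real.one_le_sqrt.2 (by nlinarith [sq_nonneg t])
    have int2a : Integrable (fun t : ℝ => rexp (-((M : ℝ) / 4) * t ^ 2)) γ := by
      apply Integrable.mono' (integrable_const 1)
      · exact (Real.measurable_exp.comp
          ((measurable_id.pow_const 2).const_mul _)).aestronglyMeasurable
      · refine ae_of_all _ fun t => ?_
        rw [Real.norm_eq_abs, abs_of_nonneg (Real.exp_pos _).le]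
        apply Real.exp_le_one_iff.2
        have : (0:ℝ) ≤ (M : ℝ) / 4 := by positivity
        nlinarith [sq_nonneg t]
    calc ∫ t, ((Real.sqrt (1 + t ^ 2))⁻¹) ^ M ∂γ
        ≤ ∫ t, (rexp (-((M : ℝ) / 4) * t ^ 2) + ((Real.sqrt 2)⁻¹) ^ M) ∂γ :=
          integral_mono int1 (int2a.add (integrable_const _)) (pow_bound M)
      _ = (Real.sqrt (1 + 2 * ((M : ℝ) / 4)))⁻¹ + ((Real.sqrt 2)⁻¹) ^ M := by
          rw [integral_add int2a (integrable_const _),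
            integral_exp_neg_mul_sq_gaussianReal (by positivity : (0:ℝ) ≤ (M : ℝ) / 4),
            integral_const]
          simp
  have hsqM : (0:ℝ) < Real.sqrt M := Real.sqrt_pos.2 (by exact_mod_cast hM)
  calc ((μ {ω | S ω ^ 2 ≤ 1}).toReal)
      ≤ rexp 2⁻¹ * ∫ ω, rexp (-S ω ^ 2 / 2) ∂μ := step1
    _ = rexp 2⁻¹ * ∫ t, ((Real.sqrt (1 + t ^ 2))⁻¹) ^ M ∂γ := by
        simp only [e2] at step2; rw [step2]
    _ ≤ rexp 2⁻¹ * ((Real.sqrt (1 + 2 * ((M : ℝ) / 4)))⁻¹ + ((Real.sqrt 2)⁻¹) ^ M) :=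
        mul_le_mul_of_nonneg_left step3 (Real.exp_pos _).le
    _ ≤ rexp 2⁻¹ * (Real.sqrt 2 / Real.sqrt M + (Real.sqrt M)⁻¹) :=
        mul_le_mul_of_nonneg_left (add_le_add (sqrt_term1 M hM) (sqrt_term2 M hM))
          (Real.exp_pos _).le
    _ = rexp 2⁻¹ * (Real.sqrt 2 + 1) / Real.sqrt M := by
        field_simp
    _ < 5 / Real.sqrt M := (div_lt_div_iff_of_pos_right hsqM).2 numeric_bound
end
end

section
/- Consider the two-layer network f(x;θ) = (1/√M) Wᵀ φ(V x) where φ is L_φ-Lipschitz with φ(0) = 0 and inputs satisfy ‖x‖_∞ ≤ c_in. Suppose that after t ≤ M^α gradient-descent steps on a cosine-similarity contrastive loss, the entrywise changes satisfy max_{ij}|V_ij(t) − V_ij(0)|, max_{ij}|W_ij(t) − W_ij(0)| ≤ c(0)(e^{βM^{α−1/2}} − 1) and the initial max-norms are at most c(0) = c_θ log M. Then for every z ∈ [Z] and input x, the gradient of the z-th output with respect to all parameters satisfies ‖∇_θ f_z(x; θ(t))‖₂ ≤ √2 D L_φ c_in c(0) e^{β M^{α−1/2}}. -/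
open scoped RealInnerProductSpace BigOperators

noncomputable section

set_option maxHeartbeats 1000000 in
/-- gradient norm bound along training. If after at most `M^α` steps the
entrywise weight changes are at most `c(0)(e^{βM^{α−1/2}} − 1)` and the initial max-norms are
at most `c(0) = c_θ log M`, then `‖∇_θ f_z(x;θ(t))‖ ≤ √2 D L_φ c_in c(0) e^{β M^{α−1/2}}`. -/
theorem gradient_norm_bound
    (M D Z : ℕ) (hM : 0 < M) (hD : 0 < D)
    (φ : ℝ → ℝ) (Lφ cin cθ β α : ℝ)
    (hφd : Differentiable ℝ φ) (hφ' : ∀ u, |deriv φ u| ≤ Lφ) (hφ0 : φ 0 = 0)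
    (θ0 θ1 : Params M D Z)
    (c0 : ℝ) (hc0 : c0 = cθ * Real.log M)
    -- initial max-norms bounded by c(0)
    (hinit : ∀ ix, |θ0 ix| ≤ c0)
    -- entrywise change after t ≤ M^α steps of gradient descent
    (t : ℕ) (ht : (t : ℝ) ≤ (M : ℝ) ^ α)
    (hchange : ∀ ix, |θ1 ix - θ0 ix| ≤ c0 * (Real.exp (β * (M : ℝ) ^ (α - 1 / 2)) - 1))
    (x : EuclideanSpace ℝ (Fin D)) (hx : ∀ d, |x d| ≤ cin)
    (z : Fin Z) :
    ‖gradient (fun θ => netOut φ θ x z) θ1‖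
      ≤ Real.sqrt 2 * D * Lφ * cin * c0 * Real.exp (β * (M : ℝ) ^ (α - 1 / 2)) := by
  set κ : ℝ := (Real.sqrt M)⁻¹ with hκ
  set B : ℝ := Real.exp (β * (M : ℝ) ^ (α - 1 / 2)) with hB
  set s : Fin M → ℝ := fun m => ∑ d, θ1 (Sum.inl (m, d)) * x d with hs
  -- linear maps
  set A : Fin M → (Params M D Z →L[ℝ] ℝ) :=
    fun m => ∑ d, x d • (EuclideanSpace.proj (Sum.inl (m, d)) : Params M D Z →L[ℝ] ℝ) with hA
  have hAapp : ∀ m (v : Params M D Z), A m v = ∑ d, v (Sum.inl (m, d)) * x d := by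
    intro m v
    simp [hA, ContinuousLinearMap.sum_apply, mul_comm]
  have hAfd : ∀ m : Fin M,
      HasFDerivAt (fun θ : Params M D Z => ∑ d, θ (Sum.inl (m, d)) * x d) (A m) θ1 := by
    intro m
    have h1 : (fun θ : Params M D Z => ∑ d, θ (Sum.inl (m, d)) * x d) = ⇑(A m) := by
      funext θ; rw [hAapp]
    rw [h1]
    exact (A m).hasFDerivAt
  have hφm : ∀ m : Fin M,
      HasFDerivAt (fun θ : Params M D Z => φ (∑ d, θ (Sum.inl (m, d)) * x d))
        (deriv φ (s m) • A m) θ1 := fun m =>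
    ((hφd (s m)).hasDerivAt).comp_hasFDerivAt θ1 (hAfd m)
  have hprod : ∀ m : Fin M,
      HasFDerivAt (fun θ : Params M D Z =>
          θ (Sum.inr (m, z)) * φ (∑ d, θ (Sum.inl (m, d)) * x d))
        (θ1 (Sum.inr (m, z)) • (deriv φ (s m) • A m)
          + φ (s m) • (EuclideanSpace.proj (Sum.inr (m, z)) : Params M D Z →L[ℝ] ℝ)) θ1 :=
    fun m => ((EuclideanSpace.proj (Sum.inr (m, z)) : Params M D Z →L[ℝ] ℝ)).hasFDerivAt.mul (hφm m)
  have hsum : HasFDerivAt (fun θ : Params M D Z =>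
        κ * ∑ m, θ (Sum.inr (m, z)) * φ (∑ d, θ (Sum.inl (m, d)) * x d))
      (κ • ∑ m, (θ1 (Sum.inr (m, z)) • (deriv φ (s m) • A m)
          + φ (s m) • (EuclideanSpace.proj (Sum.inr (m, z)) : Params M D Z →L[ℝ] ℝ))) θ1 :=
    (HasFDerivAt.fun_sum (fun m _ => hprod m)).const_mul κ
  -- the gradient vector
  set g : Params M D Z := WithLp.toLp 2 (Sum.elim
      (fun p : Fin M × Fin D => κ * θ1 (Sum.inr (p.1, z)) * deriv φ (s p.1) * x p.2)
      (fun p : Fin M × Fin Z => if p.2 = z then κ * φ (s p.1) else 0) : _ → ℝ) with hg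
  have hLg : (κ • ∑ m, (θ1 (Sum.inr (m, z)) • (deriv φ (s m) • A m)
          + φ (s m) • (EuclideanSpace.proj (Sum.inr (m, z)) : Params M D Z →L[ℝ] ℝ)))
      = (InnerProductSpace.toDual ℝ (Params M D Z)) g := by
    refine ContinuousLinearMap.ext fun v => ?_
    rw [InnerProductSpace.toDual_apply_apply]
    rw [PiLp.inner_apply]
    simp only [RCLike.inner_apply, conj_trivial, mul_comm (v _)]
    rw [Fintype.sum_sum_type]
    simp only [hg, WithLp.ofLp_toLp, Sum.elim_inl, Sum.elim_inr]
    rw [Fintype.sum_prod_type, Fintype.sum_prod_type]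
    simp only [ContinuousLinearMap.smul_apply, ContinuousLinearMap.sum_apply,
      ContinuousLinearMap.add_apply, PiLp.proj_apply, ite_mul, zero_mul,
      Finset.sum_ite_eq', Finset.mem_univ, if_true, hAapp, smul_eq_mul]
    rw [Finset.mul_sum, ← Finset.sum_add_distrib]
    refine Finset.sum_congr rfl fun m _ => ?_
    have key : ∀ (a b c vz : ℝ) (u : Fin D → ℝ),
        κ * (a * (b * ∑ d, u d * x d) + c * vz)
          = (∑ d, κ * a * b * x d * u d) + κ * c * vz := by
      intro a b c vz u
      simp only [mul_add, Finset.mul_sum]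
      exact congrArg₂ (· + ·) (Finset.sum_congr rfl fun d _ => by ring) (by ring)
    exact key _ _ _ _ _
  have hgrad : gradient (fun θ => netOut φ θ x z) θ1 = g := by
    have hfd : HasGradientAt (fun θ : Params M D Z => netOut φ θ x z) g θ1 := by
      rw [hasGradientAt_iff_hasFDerivAt, ← hLg]
      exact hsum
    exact hfd.gradient
  rw [hgrad]
  -- nonnegativity facts
  have hLφ0 : 0 ≤ Lφ := le_trans (abs_nonneg _) (hφ' 0)
  have hcin0 : 0 ≤ cin := le_trans (abs_nonneg _) (hx ⟨0, hD⟩)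
  have hc00 : 0 ≤ c0 := le_trans (abs_nonneg _) (hinit (Sum.inl (⟨0, hM⟩, ⟨0, hD⟩)))
  have hB0 : (0:ℝ) < B := Real.exp_pos _
  have hκ0 : 0 ≤ κ := by rw [hκ]; positivity
  have hκ2 : κ ^ 2 = ((M:ℝ))⁻¹ := by
    rw [hκ, inv_pow, Real.sq_sqrt (Nat.cast_nonneg M)]
  have hθ1 : ∀ ix, |θ1 ix| ≤ c0 * B := by
    intro ix
    calc |θ1 ix| = |θ0 ix + (θ1 ix - θ0 ix)| := by ring_nf
      _ ≤ |θ0 ix| + |θ1 ix - θ0 ix| := abs_add_le _ _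
      _ ≤ c0 + c0 * (B - 1) := add_le_add (hinit ix) (hchange ix)
      _ = c0 * B := by ring
  have hlip : ∀ a, |φ a| ≤ Lφ * |a| := by
    intro a
    have hl : LipschitzWith Lφ.toNNReal φ := by
      refine lipschitzWith_of_nnnorm_deriv_le hφd fun u => ?_
      rw [← NNReal.coe_le_coe, coe_nnnorm, Real.norm_eq_abs,
        Real.coe_toNNReal _ hLφ0]
      exact hφ' u
    have h := hl.dist_le_mul a 0
    simpa [hφ0, Real.dist_eq, Real.coe_toNNReal _ hLφ0] using h
  have hsm : ∀ m, |s m| ≤ (D:ℝ) * (c0 * B * cin) := by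
    intro m
    calc |s m| ≤ ∑ d, |θ1 (Sum.inl (m, d)) * x d| := Finset.abs_sum_le_sum_abs _ _
      _ ≤ ∑ _d : Fin D, c0 * B * cin := by
          refine Finset.sum_le_sum fun d _ => ?_
          rw [abs_mul, show c0 * B * cin = c0 * B * cin from rfl]
          exact mul_le_mul (hθ1 _) (hx d) (abs_nonneg _)
            (mul_nonneg hc00 hB0.le)
      _ = (D:ℝ) * (c0 * B * cin) := by
          rw [Finset.sum_const, Finset.card_univ, Fintype.card_fin, nsmul_eq_mul]
  have hφs : ∀ m, |φ (s m)| ≤ Lφ * ((D:ℝ) * (c0 * B * cin)) := fun m =>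
    le_trans (hlip (s m)) (mul_le_mul_of_nonneg_left (hsm m) hLφ0)
  -- norm computation
  rw [EuclideanSpace.norm_eq]
  set E : ℝ := Lφ * cin * c0 * B with hE
  have hE0 : 0 ≤ E := by positivity
  have hS : ∑ i, ‖g i‖ ^ 2 ≤ 2 * (D:ℝ) ^ 2 * E ^ 2 := by
    rw [Fintype.sum_sum_type]
    have h1 : ∑ p : Fin M × Fin D, ‖g (Sum.inl p)‖ ^ 2 ≤ (D:ℝ) * E ^ 2 := by
      have hb : ∀ p : Fin M × Fin D, ‖g (Sum.inl p)‖ ^ 2 ≤ κ ^ 2 * E ^ 2 := by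
        intro p
        have hab : |g (Sum.inl p)| ≤ κ * E := by
          simp only [hg, WithLp.ofLp_toLp, Sum.elim_inl]
          calc |κ * θ1 (Sum.inr (p.1, z)) * deriv φ (s p.1) * x p.2|
              = |κ| * |θ1 (Sum.inr (p.1, z))| * |deriv φ (s p.1)| * |x p.2| := by
                rw [abs_mul, abs_mul, abs_mul]
            _ ≤ κ * (c0 * B) * Lφ * cin := by
                rw [abs_of_nonneg hκ0]
                exact mul_le_mul (mul_le_mul
                  (mul_le_mul_of_nonneg_left (hθ1 _) hκ0) (hφ' _) (abs_nonneg _)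
                  (mul_nonneg hκ0 (mul_nonneg hc00 hB0.le))) (hx _) (abs_nonneg _)
                  (mul_nonneg (mul_nonneg hκ0 (mul_nonneg hc00 hB0.le)) hLφ0)
            _ = κ * E := by rw [hE]; ring
        calc ‖g (Sum.inl p)‖ ^ 2 = |g (Sum.inl p)| ^ 2 := by rw [Real.norm_eq_abs]
          _ ≤ (κ * E) ^ 2 := pow_le_pow_left₀ (abs_nonneg _) hab 2
          _ = κ ^ 2 * E ^ 2 := mul_pow _ _ _
      calc ∑ p : Fin M × Fin D, ‖g (Sum.inl p)‖ ^ 2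
          ≤ ∑ _p : Fin M × Fin D, κ ^ 2 * E ^ 2 := Finset.sum_le_sum fun p _ => hb p
        _ = (M:ℝ) * (D:ℝ) * (κ ^ 2 * E ^ 2) := by
            rw [Finset.sum_const, Finset.card_univ, Fintype.card_prod,
              Fintype.card_fin, Fintype.card_fin, nsmul_eq_mul]
            push_cast; ring
        _ = (D:ℝ) * E ^ 2 := by
            have hM0 : ((M:ℝ)) ≠ 0 := Nat.cast_ne_zero.mpr hM.ne'
            rw [hκ2]
            field_simp
    have h2 : ∑ p : Fin M × Fin Z, ‖g (Sum.inr p)‖ ^ 2 ≤ (D:ℝ) ^ 2 * E ^ 2 := by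
      have hM0 : ((M:ℝ)) ≠ 0 := Nat.cast_ne_zero.mpr hM.ne'
      have hrw : ∑ p : Fin M × Fin Z, ‖g (Sum.inr p)‖ ^ 2
          = ∑ m : Fin M, (κ * φ (s m)) ^ 2 := by
        rw [Fintype.sum_prod_type]
        refine Finset.sum_congr rfl fun m _ => ?_
        simp [hg, Real.norm_eq_abs, apply_ite (fun r : ℝ => |r| ^ 2), sq_abs, mul_pow,
          Finset.sum_ite_eq', Finset.mem_univ]
      rw [hrw]
      have hb : ∀ m : Fin M, (κ * φ (s m)) ^ 2 ≤ κ ^ 2 * ((D:ℝ) ^ 2 * E ^ 2) := by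
        intro m
        rw [mul_pow]
        refine mul_le_mul_of_nonneg_left ?_ (sq_nonneg κ)
        calc φ (s m) ^ 2 = |φ (s m)| ^ 2 := (sq_abs _).symm
          _ ≤ (Lφ * ((D:ℝ) * (c0 * B * cin))) ^ 2 :=
              pow_le_pow_left₀ (abs_nonneg _) (hφs m) 2
          _ = (D:ℝ) ^ 2 * E ^ 2 := by rw [hE]; ring
      calc ∑ m : Fin M, (κ * φ (s m)) ^ 2
          ≤ ∑ _m : Fin M, κ ^ 2 * ((D:ℝ) ^ 2 * E ^ 2) :=
            Finset.sum_le_sum fun m _ => hb m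
        _ = (M:ℝ) * (κ ^ 2 * ((D:ℝ) ^ 2 * E ^ 2)) := by
            rw [Finset.sum_const, Finset.card_univ, Fintype.card_fin, nsmul_eq_mul]
        _ = (D:ℝ) ^ 2 * E ^ 2 := by rw [hκ2]; field_simp
    have hD1 : (1:ℝ) ≤ (D:ℝ) := by exact_mod_cast hD
    have hDD : (D:ℝ) ≤ (D:ℝ) ^ 2 := by nlinarith
    nlinarith [mul_le_mul_of_nonneg_right hDD (sq_nonneg E)]
  have hR0 : 0 ≤ Real.sqrt 2 * (D:ℝ) * Lφ * cin * c0 * B := by positivity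
  calc Real.sqrt (∑ i, ‖g i‖ ^ 2) ≤ Real.sqrt (2 * (D:ℝ) ^ 2 * E ^ 2) :=
        Real.sqrt_le_sqrt hS
    _ = Real.sqrt 2 * (D:ℝ) * Lφ * cin * c0 * B := by
        rw [show 2 * (D:ℝ) ^ 2 * E ^ 2
            = (Real.sqrt 2 * (D:ℝ) * Lφ * cin * c0 * B) ^ 2 by
          have h2s : Real.sqrt 2 ^ 2 = 2 := Real.sq_sqrt (by norm_num)
          rw [hE]
          linear_combination (-(((D:ℝ) * Lφ * cin * c0 * B) ^ 2)) * h2s]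
        exact Real.sqrt_sq hR0
end
end

section
/- Let φ: ℝ → ℝ be L_φ-Lipschitz and applied entrywise, let δ' > 0, let V₀, V₁ ∈ ℝ^{M×D}, and let y ∈ ℝ^D. Then the normalized feature vectors satisfy ‖ φ(V₁ y)/(‖φ(V₁ y)‖ + δ') − φ(V₀ y)/(‖φ(V₀ y)‖ + δ') ‖ ≤ 2 L_φ ‖V₁ − V₀‖ ‖y‖ / (‖φ(V₀ y)‖ + δ'), where ‖V₁ − V₀‖ denotes the operator (spectral) norm. -/
open scoped BigOperators

noncomputable section

/-- Spectral (operator) norm of a matrix. -/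
def specNorm {m n : ℕ} (A : Matrix (Fin m) (Fin n) ℝ) : ℝ :=
  ‖LinearMap.toContinuousLinearMap (Matrix.toEuclideanLin A)‖

/-- perturbation of normalized feature vectors. For `L_φ`-Lipschitz `φ`
and `δ' > 0`,
`‖φ(V₁y)/(‖φ(V₁y)‖+δ') − φ(V₀y)/(‖φ(V₀y)‖+δ')‖ ≤ 2L_φ‖V₁ − V₀‖‖y‖/(‖φ(V₀y)‖+δ')`,
where `‖V₁ − V₀‖` is the spectral norm. -/
theorem normalized_feature_perturbation
    (M D : ℕ) (φ : ℝ → ℝ) (Lφ δ' : ℝ) (hδ' : 0 < δ')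
    (hφ : ∀ a b, |φ a - φ b| ≤ Lφ * |a - b|)
    (V₀ V₁ : Matrix (Fin M) (Fin D) ℝ) (y : EuclideanSpace ℝ (Fin D))
    (h₀ h₁ : EuclideanSpace ℝ (Fin M))
    (hh₀ : ∀ m, h₀ m = φ (∑ d, V₀ m d * y d))
    (hh₁ : ∀ m, h₁ m = φ (∑ d, V₁ m d * y d)) :
    ‖(‖h₁‖ + δ')⁻¹ • h₁ - (‖h₀‖ + δ')⁻¹ • h₀‖
      ≤ 2 * Lφ * specNorm (V₁ - V₀) * ‖y‖ / (‖h₀‖ + δ') := by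
  have hLφ : 0 ≤ Lφ := by
    have h := hφ 0 1
    rw [show |(0:ℝ) - 1| = 1 by norm_num, mul_one] at h
    exact le_trans (abs_nonneg _) h
  set w : EuclideanSpace ℝ (Fin M) := Matrix.toEuclideanLin (V₁ - V₀) y with hw
  -- entrywise bound
  have hentry : ∀ m, |h₁ m - h₀ m| ≤ Lφ * |w m| := by
    intro m
    have hwm : w m = ∑ d, (V₁ m d - V₀ m d) * y d := by
      simp only [hw, Matrix.toEuclideanLin_apply, Matrix.mulVec, dotProduct,
        Matrix.sub_apply]
    rw [hh₀, hh₁]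
    calc |φ (∑ d, V₁ m d * y d) - φ (∑ d, V₀ m d * y d)|
        ≤ Lφ * |(∑ d, V₁ m d * y d) - ∑ d, V₀ m d * y d| := hφ _ _
      _ = Lφ * |w m| := by
          rw [hwm]
          congr 2
          rw [← Finset.sum_sub_distrib]
          exact Finset.sum_congr rfl fun d _ => (sub_mul _ _ _).symm
  have hdiff : ‖h₁ - h₀‖ ≤ Lφ * ‖w‖ := by
    have h1 : ‖h₁ - h₀‖ = Real.sqrt (∑ m, (h₁ m - h₀ m)^2) := by
      rw [EuclideanSpace.norm_eq]
      congr 1; exact Finset.sum_congr rfl fun m _ => by rw [Real.norm_eq_abs, sq_abs]; rfl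
    have h2 : ‖w‖ = Real.sqrt (∑ m, (w m)^2) := by
      rw [EuclideanSpace.norm_eq]
      congr 1; exact Finset.sum_congr rfl fun m _ => by rw [Real.norm_eq_abs, sq_abs]
    rw [h1, h2, ← Real.sqrt_sq hLφ, ← Real.sqrt_mul (sq_nonneg _), Finset.mul_sum]
    apply Real.sqrt_le_sqrt
    apply Finset.sum_le_sum
    intro m _
    calc (h₁ m - h₀ m)^2 = |h₁ m - h₀ m|^2 := (sq_abs _).symm
      _ ≤ (Lφ * |w m|)^2 := by
          apply pow_le_pow_left₀ (abs_nonneg _) (hentry m)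
      _ = Lφ^2 * (w m)^2 := by rw [mul_pow, sq_abs]
  have hwnorm : ‖w‖ ≤ specNorm (V₁ - V₀) * ‖y‖ := by
    have := (LinearMap.toContinuousLinearMap (Matrix.toEuclideanLin (V₁ - V₀))).le_opNorm y
    simpa [specNorm, hw] using this
  have hE : ‖h₁ - h₀‖ ≤ Lφ * specNorm (V₁ - V₀) * ‖y‖ := by
    calc ‖h₁ - h₀‖ ≤ Lφ * ‖w‖ := hdiff
      _ ≤ Lφ * (specNorm (V₁ - V₀) * ‖y‖) := by
          exact mul_le_mul_of_nonneg_left hwnorm hLφ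
      _ = Lφ * specNorm (V₁ - V₀) * ‖y‖ := by ring
  -- normalization argument
  set α := ‖h₁‖ + δ' with hα
  set β := ‖h₀‖ + δ' with hβ
  have hα0 : 0 < α := by positivity
  have hβ0 : 0 < β := by positivity
  have key : ‖α⁻¹ • h₁ - β⁻¹ • h₀‖ ≤ 2 * ‖h₁ - h₀‖ / β := by
    have hsplit : α⁻¹ • h₁ - β⁻¹ • h₀ = (α⁻¹ - β⁻¹) • h₁ + β⁻¹ • (h₁ - h₀) := by
      rw [smul_sub, sub_smul]; abel
    rw [hsplit]
    calc ‖(α⁻¹ - β⁻¹) • h₁ + β⁻¹ • (h₁ - h₀)‖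
        ≤ ‖(α⁻¹ - β⁻¹) • h₁‖ + ‖β⁻¹ • (h₁ - h₀)‖ := norm_add_le _ _
      _ = |α⁻¹ - β⁻¹| * ‖h₁‖ + |β⁻¹| * ‖h₁ - h₀‖ := by
          rw [norm_smul, norm_smul, Real.norm_eq_abs, Real.norm_eq_abs]
      _ ≤ 2 * ‖h₁ - h₀‖ / β := by
          have habs : |α⁻¹ - β⁻¹| = |β - α| / (α * β) := by
            rw [inv_sub_inv hα0.ne' hβ0.ne', abs_div, abs_of_pos (mul_pos hα0 hβ0)]
          have hβα : |β - α| ≤ ‖h₁ - h₀‖ := by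
            rw [hα, hβ]
            have : |‖h₀‖ - ‖h₁‖| ≤ ‖h₀ - h₁‖ := abs_norm_sub_norm_le _ _
            rw [norm_sub_rev] at this
            simpa using this
          have h1n : ‖h₁‖ ≤ α := by rw [hα]; linarith [hδ']
          have hβinv : |β⁻¹| = β⁻¹ := abs_of_pos (inv_pos.mpr hβ0)
          rw [habs, hβinv]
          have t1 : |β - α| / (α * β) * ‖h₁‖ ≤ ‖h₁ - h₀‖ / β := by
            rw [div_mul_eq_mul_div, div_le_div_iff₀ (mul_pos hα0 hβ0) hβ0]
            calc |β - α| * ‖h₁‖ * β ≤ ‖h₁ - h₀‖ * α * β := by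
                  apply mul_le_mul_of_nonneg_right _ hβ0.le
                  exact mul_le_mul hβα h1n (norm_nonneg _) (norm_nonneg _)
              _ = ‖h₁ - h₀‖ * (α * β) := by ring
          have t2 : β⁻¹ * ‖h₁ - h₀‖ = ‖h₁ - h₀‖ / β := by ring
          have t3 : 2 * ‖h₁ - h₀‖ / β = ‖h₁ - h₀‖ / β + ‖h₁ - h₀‖ / β := by ring
          rw [t2, t3]; linarith
  calc ‖α⁻¹ • h₁ - β⁻¹ • h₀‖ ≤ 2 * ‖h₁ - h₀‖ / β := key
    _ ≤ 2 * Lφ * specNorm (V₁ - V₀) * ‖y‖ / β := by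
        have hS : 0 ≤ specNorm (V₁ - V₀) := norm_nonneg _
        have hrw : 2 * Lφ * specNorm (V₁ - V₀) * ‖y‖ / β
            = 2 * (Lφ * specNorm (V₁ - V₀) * ‖y‖) / β := by ring
        rw [hrw]
        gcongr 2 * ?_ / β
    _ = 2 * Lφ * specNorm (V₁ - V₀) * ‖y‖ / (‖h₀‖ + δ') := rfl
end
end
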